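/- Let (A,Γ,G,≺) be a linear GIFS on ℝ^d with open set condition and 0 < h_i := H^δ(E_i) < ∞ for all i, let G* be its measure-recording GIFS with projections ρ_i : Γ_i^∞ → F_i = [0,h_i]. If ω ≠ γ are infinite paths in Γ_i^∞ with ρ_i(ω) = ρ_i(γ), then for every n ≥ 1 the prefixes ω|_n and γ|_n are either equal or adjacent in the dictionary order on Γ_i^n. -/

import Mathlib

open MeasureTheory Set

noncomputable section

/-- A graph-directed iterated function system (GIFS) with vertex set `Fin N`,
a finite edge set, and a contracting similitude of ratio `r e ∈ (0,1)` for each edge. -/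
structure GIFS (X : Type) [MetricSpace X] (N : ℕ) where
  Edge : Type
  fintypeEdge : Fintype Edge
  src : Edge → Fin N
  tgt : Edge → Fin N
  r : Edge → ℝ
  r_pos : ∀ e, 0 < r e
  r_lt_one : ∀ e, r e < 1
  g : Edge → X → X
  g_sim : ∀ e x y, dist (g e x) (g e y) = r e * dist x y

attribute [instance] GIFS.fintypeEdge

/-- The finite prefix of length `n` of an infinite word. -/
def prefixList {α : Type} (ω : ℕ → α) (n : ℕ) : List α := List.ofFn fun k : Fin n => ω k

/-- Spectral radius of a real square matrix: supremum of the moduli of its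
complex eigenvalues. -/
def specRad {n : ℕ} (A : Matrix (Fin n) (Fin n) ℝ) : ℝ :=
  sSup ((fun z => ‖z‖) '' spectrum ℂ (A.map Complex.ofReal))

namespace GIFS

variable {X : Type} [MetricSpace X] {N : ℕ}

/-- `γ` is a finite path (possibly empty) starting from the vertex `i`. -/
def IsPathFrom (G : GIFS X N) (i : Fin N) (γ : List G.Edge) : Prop :=
  γ.Chain' (fun a b => G.tgt a = G.src b) ∧ ∀ e ∈ γ.head?, G.src e = i

/-- The terminal vertex of a finite path starting at `i`. -/
def pathTgt (G : GIFS X N) (i : Fin N) (γ : List G.Edge) : Fin N :=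
  (γ.getLast?).elim i G.tgt

/-- The composition `g_{γ₁} ∘ ⋯ ∘ g_{γ_n}` along a finite path. -/
def pathMap (G : GIFS X N) (γ : List G.Edge) : X → X :=
  γ.foldr (fun e f => G.g e ∘ f) id

/-- The cylinder set `E_γ = g_{γ₁} ∘ ⋯ ∘ g_{γ_n} (E_{t(γ)})` of a finite path from `i`. -/
def pathSet (G : GIFS X N) (E : Fin N → Set X) (i : Fin N) (γ : List G.Edge) : Set X :=
  G.pathMap γ '' E (G.pathTgt i γ)

/-- `E` is the family of invariant sets of the GIFS: nonempty compact sets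
satisfying the set equations. -/
def IsInvariant (G : GIFS X N) (E : Fin N → Set X) : Prop :=
  (∀ i, (E i).Nonempty) ∧ (∀ i, IsCompact (E i)) ∧
    ∀ i, E i = ⋃ e ∈ {e : G.Edge | G.src e = i}, G.g e '' E (G.tgt e)

/-- The open set condition witnessed by a given family of open sets. -/
def OSCWith (G : GIFS X N) (U : Fin N → Set X) : Prop :=
  (∀ i, (U i).Nonempty ∧ IsOpen (U i)) ∧
  (∀ e : G.Edge, G.g e '' U (G.tgt e) ⊆ U (G.src e)) ∧
  ∀ e f : G.Edge, e ≠ f → G.src e = G.src f →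
    Disjoint (G.g e '' U (G.tgt e)) (G.g f '' U (G.tgt f))

/-- The open set condition. -/
def OSC (G : GIFS X N) : Prop := ∃ U, G.OSCWith U

/-- The base graph is strongly connected. -/
def StronglyConnected (G : GIFS X N) : Prop :=
  ∀ i j : Fin N, ∃ γ : List G.Edge, γ ≠ [] ∧ G.IsPathFrom i γ ∧ G.pathTgt i γ = j

/-- The matrix `M(t)` with entries `M(t)_{ij} = ∑_{e ∈ Γ_{ij}} r_e ^ t`. -/
def M (G : GIFS X N) (t : ℝ) : Matrix (Fin N) (Fin N) ℝ :=
  Matrix.of fun i j => ∑ e : G.Edge, if G.src e = i ∧ G.tgt e = j then G.r e ^ t else 0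

/-- `δ` is the similarity dimension: the (unique) positive real with `ρ(M(δ)) = 1`. -/
def IsSimDim (G : GIFS X N) (δ : ℝ) : Prop := 0 < δ ∧ specRad (G.M δ) = 1

/-- The space of infinite paths emanating from the vertex `i`. -/
def InfPath (G : GIFS X N) (i : Fin N) : Type :=
  {ω : ℕ → G.Edge // G.src (ω 0) = i ∧ ∀ n, G.tgt (ω n) = G.src (ω (n + 1))}

instance (G : GIFS X N) : MeasurableSpace G.Edge := ⊤

instance (G : GIFS X N) (i : Fin N) : MeasurableSpace (G.InfPath i) :=
  MeasurableSpace.comap Subtype.val MeasurableSpace.pi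

/-- `π` is the symbolic projection `Γ_i^∞ → E_i` : the image of an infinite path
belongs to every cylinder set of its finite prefixes. -/
def IsCoding (G : GIFS X N) (E : Fin N → Set X) (i : Fin N) (π : G.InfPath i → X) : Prop :=
  ∀ (ω : G.InfPath i) (n : ℕ), π ω ∈ G.pathSet E i (prefixList ω.1 n)

end GIFS

/-- An ordered GIFS: a GIFS with a partial order on the edges which restricts to
a linear order on each `Γ_i` (edges emanating from `i`), edges emanating from
distinct vertices being incomparable. -/
structure OGIFS (X : Type) [MetricSpace X] (N : ℕ) extends GIFS X N where
  elt : Edge → Edge → Prop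
  elt_src : ∀ {a b}, elt a b → src a = src b
  elt_irrefl : ∀ a, ¬ elt a a
  elt_trans : ∀ {a b c}, elt a b → elt b c → elt a c
  elt_total : ∀ a b, src a = src b → elt a b ∨ a = b ∨ elt b a

namespace OGIFS

variable {X : Type} [MetricSpace X] {N : ℕ}

/-- The induced dictionary order on finite paths. -/
def PathLt (G : OGIFS X N) (γ ω : List G.Edge) : Prop := List.Lex G.elt γ ω

/-- Two adjacent edges in some `Γ_i`: consecutive in the order `≺`. -/
def AdjacentEdges (G : OGIFS X N) (e f : G.Edge) : Prop :=
  G.elt e f ∧ ¬ ∃ e', G.elt e e' ∧ G.elt e' f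

/-- Two same-length paths from `i`, adjacent (consecutive) in the dictionary order. -/
def Adjacent (G : OGIFS X N) (i : Fin N) (γ ω : List G.Edge) : Prop :=
  G.toGIFS.IsPathFrom i γ ∧ G.toGIFS.IsPathFrom i ω ∧ γ.length = ω.length ∧
  G.PathLt γ ω ∧
  ¬ ∃ η : List G.Edge, G.toGIFS.IsPathFrom i η ∧ η.length = γ.length ∧
      G.PathLt γ η ∧ G.PathLt η ω

/-- A linear GIFS: every two adjacent cylinders of invariant sets intersect. -/
def IsLinear (G : OGIFS X N) (E : Fin N → Set X) : Prop :=
  ∀ (i : Fin N) (γ ω : List G.Edge), G.Adjacent i γ ω →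
    (G.toGIFS.pathSet E i γ ∩ G.toGIFS.pathSet E i ω).Nonempty

/-- An infinite path from `i` is lowest if all its finite prefixes are lowest in the
dictionary order among same-length paths from `i`. -/
def IsLowest (G : OGIFS X N) (i : Fin N) (ω : G.toGIFS.InfPath i) : Prop :=
  ∀ (n : ℕ) (γ : List G.Edge), G.toGIFS.IsPathFrom i γ → γ.length = n →
    γ = prefixList ω.1 n ∨ G.PathLt (prefixList ω.1 n) γ

/-- An infinite path from `i` is highest if all its finite prefixes are highest. -/
def IsHighest (G : OGIFS X N) (i : Fin N) (ω : G.toGIFS.InfPath i) : Prop :=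
  ∀ (n : ℕ) (γ : List G.Edge), G.toGIFS.IsPathFrom i γ → γ.length = n →
    γ = prefixList ω.1 n ∨ G.PathLt γ (prefixList ω.1 n)

/-- `a` is the head of `E_i`: the projection of the lowest infinite path from `i`. -/
def IsHead (G : OGIFS X N) (E : Fin N → Set X) (i : Fin N) (a : X) : Prop :=
  ∃ ω : G.toGIFS.InfPath i, G.IsLowest i ω ∧
    ∀ n : ℕ, a ∈ G.toGIFS.pathSet E i (prefixList ω.1 n)

/-- `a` is the tail of `E_i`: the projection of the highest infinite path from `i`. -/
def IsTail (G : OGIFS X N) (E : Fin N → Set X) (i : Fin N) (a : X) : Prop :=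
  ∃ ω : G.toGIFS.InfPath i, G.IsHighest i ω ∧
    ∀ n : ℕ, a ∈ G.toGIFS.pathSet E i (prefixList ω.1 n)

/-- The chain condition: for adjacent edges `e ≺ f` emanating from a common vertex,
`g_e(tail of E_{t(e)}) = g_f(head of E_{t(f)})`. -/
def ChainCondition (G : OGIFS X N) (E : Fin N → Set X) : Prop :=
  ∀ e f : G.Edge, G.AdjacentEdges e f →
    ∀ b a : X, G.IsTail E (G.tgt e) b → G.IsHead E (G.tgt f) a → G.g e b = G.g f a

open Classical in
/-- Translation part of the maps of the measure-recording GIFS: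
`b_e = ∑_{e' ≺ e} h_{t(e')} r_{e'}^δ`. -/
def bCoef (G : OGIFS X N) (δ : ℝ) (h : Fin N → ℝ) (e : G.Edge) : ℝ :=
  ∑ e' : G.Edge, if G.elt e' e then h (G.tgt e') * G.r e' ^ δ else 0

/-- The maps `f_e (x) = r_e^δ x + b_e` of the measure-recording GIFS. -/
def fmap (G : OGIFS X N) (δ : ℝ) (h : Fin N → ℝ) (e : G.Edge) : ℝ → ℝ :=
  fun x => G.r e ^ δ * x + G.bCoef δ h e

/-- Composition of the measure-recording maps along a finite path. -/
def fPathMap (G : OGIFS X N) (δ : ℝ) (h : Fin N → ℝ) (γ : List G.Edge) : ℝ → ℝ :=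
  γ.foldr (fun e f => G.fmap δ h e ∘ f) id

/-- Cylinder intervals `F_γ` of the measure-recording GIFS (with `F_i = [0, h_i]`). -/
def fPathSet (G : OGIFS X N) (δ : ℝ) (h : Fin N → ℝ) (i : Fin N) (γ : List G.Edge) : Set ℝ :=
  G.fPathMap δ h γ '' Icc 0 (h (G.toGIFS.pathTgt i γ))

/-- `ρ` is the symbolic projection `Γ_i^∞ → F_i` of the measure-recording GIFS. -/
def IsFCoding (G : OGIFS X N) (δ : ℝ) (h : Fin N → ℝ) (i : Fin N)
    (ρ : G.toGIFS.InfPath i → ℝ) : Prop :=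
  ∀ (ω : G.toGIFS.InfPath i) (n : ℕ), ρ ω ∈ G.fPathSet δ h i (prefixList ω.1 n)

end OGIFS

/-- An optimal parametrization of an `s`-set `K`: a surjection `[0,1] → K` which is
almost one-to-one, measure-preserving and `1/s`-Hölder continuous. -/
def OptimalParam {X : Type} [MetricSpace X] [MeasurableSpace X] [BorelSpace X]
    (s : ℝ) (K : Set X) (ψ : ℝ → X) : Prop :=
  ψ '' Icc (0:ℝ) 1 = K ∧
  (∃ K' ⊆ K, ∃ I' ⊆ Icc (0:ℝ) 1,
      μH[s] (K \ K') = 0 ∧ volume (Icc (0:ℝ) 1 \ I') = 0 ∧ BijOn ψ I' K') ∧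
  (∀ F : Set ℝ, F ⊆ Icc (0:ℝ) 1 → MeasurableSet F →
      μH[s] (ψ '' F) = μH[s] K * volume F) ∧
  (∀ B : Set X, B ⊆ K → MeasurableSet B →
      volume (ψ ⁻¹' B ∩ Icc (0:ℝ) 1) = (μH[s] K)⁻¹ * μH[s] B) ∧
  ∃ c' : NNReal, 0 < c' ∧ HolderOnWith c' (Real.toNNReal (1 / s)) ψ (Icc (0:ℝ) 1)

end

/-!
Write `rowSum u = ∑_{e ∈ Γ_u} h_{t(e)} r_e^δ`. Subadditivity of `μH[δ]` over the set equations
gives `h ≤ rowSum`. Conversely, at a vertex `v` reachable from `i`, follow a path to `v` and then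
`≺`-maximal edges forever: `ρ` of this infinite path has coordinates `y` in the successive
cylinder intervals, and `rowSum - y` is contracted by a factor `r_e^δ < 1` at every step, so
`rowSum v ≤ h v`. Then each `f_e` maps `F_{t(e)}` into `F_{s(e)}` along paths from `i`, and
cylinder intervals of same-length paths are ordered like the paths themselves. A point of
`F_α ∩ F_β` with `α ≺ η ≺ β` would lie both below and above the nondegenerate interval `F_η`.
-/

open Filter Topology

lemma prefixList_length {α : Type} (ω : ℕ → α) (n : ℕ) : (prefixList ω n).length = n := by
  simp [prefixList]

lemma prefixList_succ {α : Type} (ω : ℕ → α) (n : ℕ) :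
    prefixList ω (n + 1) = prefixList ω n ++ [ω n] := by
  rw [prefixList, List.ofFn_succ']
  simp [prefixList]

lemma prefixList_succ' {α : Type} (ω : ℕ → α) (n : ℕ) :
    prefixList ω (n + 1) = ω 0 :: prefixList (fun k => ω (k + 1)) n := by
  simp [prefixList, List.ofFn_succ]

lemma le_zero_of_le_mul_succ {D : ℕ → ℝ} {q C : ℝ} (hq₀ : 0 ≤ q) (hq₁ : q < 1)
    (hC : ∀ n, D n ≤ C) (hD : ∀ n, D n ≤ q * D (n + 1)) (n : ℕ) : D n ≤ 0 := by
  have hpow : ∀ k n, D n ≤ q ^ k * C := by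
    intro k
    induction k with
    | zero => simpa using hC
    | succ k ih =>
      intro n
      calc D n ≤ q * D (n + 1) := hD n
        _ ≤ q * (q ^ k * C) := mul_le_mul_of_nonneg_left (ih (n + 1)) hq₀
        _ = q ^ (k + 1) * C := by ring
  have hlim : Tendsto (fun k => q ^ k * C) atTop (𝓝 0) := by
    simpa using (tendsto_pow_atTop_nhds_zero_of_lt_one hq₀ hq₁).mul_const C
  exact le_of_tendsto_of_tendsto' tendsto_const_nhds hlim fun k => hpow k n

namespace GIFS

variable {X : Type} [MetricSpace X] {N : ℕ} (G : GIFS X N)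

def Step (u v : Fin N) : Prop := ∃ e, G.src e = u ∧ G.tgt e = v

lemma isPathFrom_nil (u : Fin N) : G.IsPathFrom u [] := ⟨List.isChain_nil, by simp⟩

lemma isPathFrom_cons_iff {u : Fin N} {e : G.Edge} {l : List G.Edge} :
    G.IsPathFrom u (e :: l) ↔ G.src e = u ∧ G.IsPathFrom (G.tgt e) l := by
  change List.IsChain _ (e :: l) ∧ _ ↔ _ ∧ List.IsChain _ l ∧ _
  cases l with
  | nil => simp
  | cons b l => simp [List.isChain_cons_cons, eq_comm, and_comm]

lemma pathTgt_cons (u : Fin N) (e : G.Edge) (l : List G.Edge) :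
    G.pathTgt u (e :: l) = G.pathTgt (G.tgt e) l := by
  cases l with
  | nil => rfl
  | cons b l => simp [pathTgt, List.getLast?_eq_some_getLast]

lemma pathTgt_append_singleton (u : Fin N) (l : List G.Edge) (e : G.Edge) :
    G.pathTgt u (l ++ [e]) = G.tgt e := by
  simp [pathTgt]

lemma lex_trichotomy {lt : G.Edge → G.Edge → Prop}
    (hlt : ∀ e f, G.src e = G.src f → lt e f ∨ e = f ∨ lt f e) {u : Fin N} {α β : List G.Edge}
    (hα : G.IsPathFrom u α) (hβ : G.IsPathFrom u β) (hlen : α.length = β.length) :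
    α = β ∨ List.Lex lt α β ∨ List.Lex lt β α := by
  induction α generalizing u β with
  | nil => exact .inl (List.length_eq_zero_iff.mp hlen.symm).symm
  | cons e α ih =>
    obtain _ | ⟨f, β⟩ := β
    · simp at hlen
    obtain ⟨he, hα⟩ := G.isPathFrom_cons_iff.mp hα
    obtain ⟨hf, hβ⟩ := G.isPathFrom_cons_iff.mp hβ
    rcases hlt e f (he.trans hf.symm) with hef | rfl | hfe
    · exact .inr (.inl (.rel hef))
    · rcases ih hα hβ (by simpa using hlen) with rfl | hlex | hlex
      · exact .inl rfl
      · exact .inr (.inl (.cons hlex))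
      · exact .inr (.inr (.cons hlex))
    · exact .inr (.inr (.rel hfe))

namespace InfPath

variable {G}

def cons {u : Fin N} (e : G.Edge) (he : G.src e = u) (ω : G.InfPath (G.tgt e)) :
    G.InfPath u :=
  ⟨fun | 0 => e | k + 1 => ω.1 k, he, fun | 0 => ω.2.1.symm | k + 1 => ω.2.2 k⟩

def tail {u : Fin N} (ω : G.InfPath u) : G.InfPath (G.tgt (ω.1 0)) :=
  ⟨fun k => ω.1 (k + 1), (ω.2.2 0).symm, fun k => ω.2.2 (k + 1)⟩

lemma isPathFrom_prefixList {u : Fin N} (ω : G.InfPath u) (n : ℕ) :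
    G.IsPathFrom u (prefixList ω.1 n) := by
  induction n generalizing u with
  | zero => exact G.isPathFrom_nil u
  | succ n ih =>
    rw [prefixList_succ']
    exact G.isPathFrom_cons_iff.mpr ⟨ω.2.1, ih ω.tail⟩

lemma pathTgt_prefixList {u : Fin N} (ω : G.InfPath u) (n : ℕ) :
    G.pathTgt u (prefixList ω.1 n) = G.src (ω.1 n) := by
  cases n with
  | zero => exact ω.2.1.symm
  | succ n => rw [prefixList_succ, pathTgt_append_singleton, ω.2.2 n]

end InfPath

lemma exists_infPath_of_reachable {u v : Fin N} (hv : Relation.ReflTransGen G.Step u v)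
    (τ : ℕ → G.Edge) (hτ₀ : G.src (τ 0) = v) (hτ : ∀ k, G.tgt (τ k) = G.src (τ (k + 1))) :
    ∃ (ω : G.InfPath u) (n : ℕ), ∀ k, ω.1 (n + k) = τ k := by
  induction hv using Relation.ReflTransGen.head_induction_on with
  | refl => exact ⟨⟨τ, hτ₀, hτ⟩, 0, by simp⟩
  | head hstep _ ih =>
    obtain ⟨e, he, rfl⟩ := hstep
    obtain ⟨ω, n, hω⟩ := ih
    exact ⟨.cons e he ω, n + 1, fun k => by simpa [InfPath.cons, add_right_comm] using hω k⟩

lemma IsInvariant.exists_src_eq {E : Fin N → Set X} (hE : G.IsInvariant E) (u : Fin N) :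
    ∃ e, G.src e = u := by
  obtain ⟨x, hx⟩ := hE.1 u
  rw [hE.2.2 u] at hx
  simp only [mem_iUnion] at hx
  obtain ⟨e, he, -⟩ := hx
  exact ⟨e, he⟩

lemma hausdorffMeasure_le_sum_of_isInvariant [MeasurableSpace X] [BorelSpace X]
    {E : Fin N → Set X} (hE : G.IsInvariant E) {δ : ℝ} (hδ : 0 ≤ δ) (u : Fin N) :
    μH[δ] (E u) ≤ ∑ e ∈ Finset.univ.filter (G.src · = u),
      ((G.r e).toNNReal : ENNReal) ^ δ * μH[δ] (E (G.tgt e)) := by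
  have hlip (e : G.Edge) : LipschitzWith (G.r e).toNNReal (G.g e) :=
    .of_dist_le_mul fun x y => by rw [G.g_sim, Real.coe_toNNReal _ (G.r_pos e).le]
  calc μH[δ] (E u)
      _ ≤ ∑ e ∈ Finset.univ.filter (G.src · = u), μH[δ] (G.g e '' E (G.tgt e)) := by
        conv_lhs => rw [hE.2.2 u]
        refine le_trans (measure_mono ?_) (measure_biUnion_finset_le _ _)
        simp
      _ ≤ _ := Finset.sum_le_sum fun e _ =>
        (hlip e).lipschitzOnWith.hausdorffMeasure_image_le hδ

noncomputable def rowSum (δ : ℝ) (h : Fin N → ℝ) (u : Fin N) : ℝ :=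
  ∑ e : G.Edge, if G.src e = u then h (G.tgt e) * G.r e ^ δ else 0

lemma rpow_r_pos {δ : ℝ} (e : G.Edge) : 0 < G.r e ^ δ := Real.rpow_pos_of_pos (G.r_pos e) δ

lemma le_rowSum_of_isInvariant [MeasurableSpace X] [BorelSpace X] {E : Fin N → Set X}
    (hE : G.IsInvariant E) {δ : ℝ} (hδ : 0 ≤ δ) (hfin : ∀ j, μH[δ] (E j) ≠ ⊤) {h : Fin N → ℝ}
    (hh : ∀ j, h j = (μH[δ] (E j)).toReal) (u : Fin N) : h u ≤ G.rowSum δ h u := by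
  have hterm (e : G.Edge) : (((G.r e).toNNReal : ENNReal) ^ δ * μH[δ] (E (G.tgt e))).toReal =
      h (G.tgt e) * G.r e ^ δ := by
    rw [ENNReal.toReal_mul, ← ENNReal.toReal_rpow, ENNReal.coe_toReal,
      Real.coe_toNNReal _ (G.r_pos e).le, hh, mul_comm]
  have hfin' (e : G.Edge) : ((G.r e).toNNReal : ENNReal) ^ δ * μH[δ] (E (G.tgt e)) ≠ ⊤ :=
    ENNReal.mul_ne_top (ENNReal.rpow_ne_top_of_nonneg hδ ENNReal.coe_ne_top) (hfin _)
  calc h u ≤ (∑ e ∈ Finset.univ.filter (G.src · = u),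
        ((G.r e).toNNReal : ENNReal) ^ δ * μH[δ] (E (G.tgt e))).toReal := by
        rw [hh]
        exact ENNReal.toReal_mono (ENNReal.sum_ne_top.mpr fun e _ => hfin' e)
          (G.hausdorffMeasure_le_sum_of_isInvariant hE hδ u)
    _ = G.rowSum δ h u := by
        rw [ENNReal.toReal_sum fun e _ => hfin' e, rowSum, Finset.sum_filter]
        simp only [hterm]

end GIFS

namespace OGIFS

variable {X : Type} [MetricSpace X] {N : ℕ} (G : OGIFS X N) {δ : ℝ} {h : Fin N → ℝ}

lemma fPathMap_cons (e : G.Edge) (l : List G.Edge) (z : ℝ) :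
    G.fPathMap δ h (e :: l) z = G.r e ^ δ * G.fPathMap δ h l z + G.bCoef δ h e := rfl

lemma fPathMap_append (l₁ l₂ : List G.Edge) (z : ℝ) :
    G.fPathMap δ h (l₁ ++ l₂) z = G.fPathMap δ h l₁ (G.fPathMap δ h l₂ z) := by
  induction l₁ with
  | nil => rfl
  | cons e l ih => simp only [List.cons_append, fPathMap_cons, ih]

lemma fPathMap_strictMono (l : List G.Edge) : StrictMono (G.fPathMap δ h l) := by
  induction l with
  | nil => exact strictMono_id
  | cons e l ih =>
    intro a b hab
    simp only [fPathMap_cons]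
    gcongr
    · exact G.rpow_r_pos e
    · exact ih hab

lemma bCoef_nonneg (h₀ : ∀ j, 0 ≤ h j) (e : G.Edge) : 0 ≤ G.bCoef δ h e :=
  Finset.sum_nonneg fun e' _ => by
    split_ifs
    · exact mul_nonneg (h₀ _) (G.rpow_r_pos e').le
    · exact le_rfl

open Classical in
lemma bCoef_add_eq_sum (e : G.Edge) :
    G.bCoef δ h e + h (G.tgt e) * G.r e ^ δ =
      ∑ e' ∈ Finset.univ.filter (fun e' => G.elt e' e ∨ e' = e), h (G.tgt e') * G.r e' ^ δ := by
  have hdisj : Disjoint (Finset.univ.filter (G.elt · e)) (Finset.univ.filter (· = e)) :=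
    Finset.disjoint_filter.2 fun _ _ he' he'e => G.elt_irrefl e (he'e ▸ he')
  rw [Finset.filter_or, Finset.sum_union hdisj, bCoef, Finset.sum_filter]
  simp [Finset.sum_filter]

open Classical in
lemma bCoef_add_le_bCoef (h₀ : ∀ j, 0 ≤ h j) {e f : G.Edge} (hef : G.elt e f) :
    G.bCoef δ h e + h (G.tgt e) * G.r e ^ δ ≤ G.bCoef δ h f := by
  rw [bCoef_add_eq_sum, bCoef, ← Finset.sum_filter]
  refine Finset.sum_le_sum_of_subset_of_nonneg (Finset.monotone_filter_right _ ?_)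
    fun e' _ _ => mul_nonneg (h₀ _) (G.rpow_r_pos e').le
  rintro e' - (he' | rfl)
  exacts [G.elt_trans he' hef, hef]

open Classical in
lemma bCoef_add_le_rowSum (h₀ : ∀ j, 0 ≤ h j) (e : G.Edge) :
    G.bCoef δ h e + h (G.tgt e) * G.r e ^ δ ≤ G.rowSum δ h (G.src e) := by
  rw [bCoef_add_eq_sum, GIFS.rowSum, ← Finset.sum_filter]
  refine Finset.sum_le_sum_of_subset_of_nonneg (Finset.monotone_filter_right _ ?_)
    fun e' _ _ => mul_nonneg (h₀ _) (G.rpow_r_pos e').le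
  rintro e' - (he' | rfl)
  exacts [G.elt_src he', rfl]

open Classical in
lemma rowSum_eq_of_forall_not_elt {e : G.Edge} (he : ∀ a, ¬ G.elt e a) :
    G.rowSum δ h (G.src e) = G.bCoef δ h e + h (G.tgt e) * G.r e ^ δ := by
  rw [bCoef_add_eq_sum, GIFS.rowSum, ← Finset.sum_filter]
  refine Finset.sum_congr (Finset.filter_congr fun e' _ => ⟨fun hsrc => ?_, ?_⟩) fun _ _ => rfl
  · rcases G.elt_total e' e hsrc with he' | rfl | he'
    exacts [.inl he', .inr rfl, absurd he' (he e')]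
  · rintro (he' | rfl)
    exacts [G.elt_src he', rfl]

lemma exists_forall_not_elt {u : Fin N} (hu : ∃ e, G.src e = u) :
    ∃ m, G.src m = u ∧ ∀ a, ¬ G.elt m a := by
  have : IsTrans G.Edge (flip G.elt) := ⟨fun _ _ _ hab hbc => G.elt_trans hbc hab⟩
  have : Std.Irrefl (flip G.elt) := ⟨G.elt_irrefl⟩
  obtain ⟨m, hm, hmax⟩ :=
    (Finite.wellFounded_of_trans_of_irrefl (flip G.elt)).has_min {e | G.src e = u} hu
  exact ⟨m, hm, fun a hma => hmax a ((G.elt_src hma).symm.trans hm) hma⟩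

lemma fmap_mapsTo (h₀ : ∀ j, 0 ≤ h j) {e : G.Edge}
    (hrow : G.rowSum δ h (G.src e) ≤ h (G.src e)) :
    MapsTo (G.fmap δ h e) (Icc 0 (h (G.tgt e))) (Icc 0 (h (G.src e))) := by
  rintro z ⟨hz₀, hz₁⟩
  have hr := G.rpow_r_pos (δ := δ) e
  have hb := G.bCoef_nonneg (δ := δ) h₀ e
  have hsum := G.bCoef_add_le_rowSum (δ := δ) h₀ e
  simp only [fmap, mem_Icc]
  constructor
  · positivity
  · nlinarith

variable {i : Fin N} {ρ : G.InfPath i → ℝ}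

lemma rowSum_le_of_isFCoding_of_forall_not_elt (hδ : 0 < δ)
    (hsub : ∀ j, h j ≤ G.rowSum δ h j) (hρ : G.IsFCoding δ h i ρ) (ω : G.InfPath i) (n₀ : ℕ)
    (htop : ∀ k a, ¬ G.elt (ω.1 (n₀ + k)) a) :
    G.rowSum δ h (G.src (ω.1 n₀)) ≤ h (G.src (ω.1 n₀)) := by
  have hcoord (n : ℕ) : ∃ y ∈ Icc 0 (h (G.src (ω.1 n))),
      G.fPathMap δ h (prefixList ω.1 n) y = ρ ω := by
    simpa [fPathSet, GIFS.InfPath.pathTgt_prefixList] using hρ ω n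
  choose y hy hyρ using hcoord
  have hstep (n : ℕ) : y n = G.r (ω.1 n) ^ δ * y (n + 1) + G.bCoef δ h (ω.1 n) :=
    (G.fPathMap_strictMono _).injective <| by
      rw [hyρ, ← hyρ (n + 1), prefixList_succ, fPathMap_append]
      rfl
  have : Nonempty G.Edge := ⟨ω.1 0⟩
  have : Nonempty (Fin N) := ⟨i⟩
  obtain ⟨e₀, he₀⟩ := Finite.exists_max fun e => G.r e ^ δ
  obtain ⟨u₀, hu₀⟩ := Finite.exists_max (G.rowSum δ h)
  let D (k : ℕ) := G.rowSum δ h (G.src (ω.1 (n₀ + k))) - y (n₀ + k)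
  have hD_nonneg (k : ℕ) : 0 ≤ D k := by
    linarith [hsub (G.src (ω.1 (n₀ + k))), (hy (n₀ + k)).2]
  have hD (k : ℕ) : D k ≤ G.r e₀ ^ δ * D (k + 1) := by
    have hsrc : G.src (ω.1 (n₀ + k + 1)) = G.tgt (ω.1 (n₀ + k)) := (ω.2.2 (n₀ + k)).symm
    have heq :
        D k = G.r (ω.1 (n₀ + k)) ^ δ * (h (G.tgt (ω.1 (n₀ + k))) - y (n₀ + k + 1)) := by
      change G.rowSum δ h (G.src (ω.1 (n₀ + k))) - y (n₀ + k) = _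
      rw [G.rowSum_eq_of_forall_not_elt (htop k), hstep (n₀ + k)]
      ring
    have hle : h (G.tgt (ω.1 (n₀ + k))) - y (n₀ + k + 1) ≤ D (k + 1) := by
      change _ ≤ G.rowSum δ h (G.src (ω.1 (n₀ + k + 1))) - y (n₀ + k + 1)
      rw [hsrc]
      linarith [hsub (G.tgt (ω.1 (n₀ + k)))]
    calc D k ≤ G.r (ω.1 (n₀ + k)) ^ δ * D (k + 1) := by
          rw [heq]; exact mul_le_mul_of_nonneg_left hle (G.rpow_r_pos _).le
      _ ≤ G.r e₀ ^ δ * D (k + 1) := mul_le_mul_of_nonneg_right (he₀ _) (hD_nonneg _)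
  have hD₀ : G.rowSum δ h (G.src (ω.1 n₀)) - y n₀ ≤ 0 :=
    le_zero_of_le_mul_succ (C := G.rowSum δ h u₀) (G.rpow_r_pos e₀).le
    (Real.rpow_lt_one (G.r_pos e₀).le (G.r_lt_one e₀) hδ)
    (fun k => by linarith [hu₀ (G.src (ω.1 (n₀ + k))), (hy (n₀ + k)).1]) hD 0
  linarith [(hy n₀).2]

lemma rowSum_le_of_isFCoding (hδ : 0 < δ) (hsub : ∀ j, h j ≤ G.rowSum δ h j)
    (ho : ∀ u, ∃ e, G.src e = u) (hρ : G.IsFCoding δ h i ρ) {v : Fin N}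
    (hv : Relation.ReflTransGen G.Step i v) :
    G.rowSum δ h v ≤ h v := by
  choose top htop_src htop using fun u => G.exists_forall_not_elt (ho u)
  obtain ⟨ω, n, hω⟩ := G.exists_infPath_of_reachable hv (fun k => top ((G.tgt ∘ top)^[k] v))
    (htop_src v) fun k => by simp [Function.iterate_succ_apply', htop_src]
  have hv : G.src (ω.1 n) = v := by simpa [htop_src] using congrArg G.src (hω 0)
  simpa [hv] using G.rowSum_le_of_isFCoding_of_forall_not_elt hδ hsub hρ ω n
    fun k => hω k ▸ htop _

section Reachable

variable {u : Fin N} (h₀ : ∀ j, 0 ≤ h j)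
  (hrow : ∀ v, Relation.ReflTransGen G.Step u v → G.rowSum δ h v ≤ h v)
include h₀ hrow

lemma fPathMap_mapsTo {τ : List G.Edge} (hτ : G.IsPathFrom u τ) :
    MapsTo (G.fPathMap δ h τ) (Icc 0 (h (G.pathTgt u τ))) (Icc 0 (h u)) := by
  induction τ generalizing u with
  | nil => exact mapsTo_id _
  | cons e τ ih =>
    obtain ⟨rfl, hτ'⟩ := G.isPathFrom_cons_iff.mp hτ
    rw [GIFS.pathTgt_cons]
    exact (G.fmap_mapsTo h₀ (hrow _ .refl)).comp
      (ih (fun v hv => hrow v (.head ⟨e, rfl, rfl⟩ hv)) hτ')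

lemma fPathMap_le_of_lex {α β : List G.Edge} (hα : G.IsPathFrom u α) (hβ : G.IsPathFrom u β)
    (hlen : α.length = β.length) (hlex : List.Lex G.elt α β) {z w : ℝ}
    (hz : z ∈ Icc 0 (h (G.pathTgt u α))) (hw : w ∈ Icc 0 (h (G.pathTgt u β))) :
    G.fPathMap δ h α z ≤ G.fPathMap δ h β w := by
  induction hlex generalizing u with
  | nil => simp at hlen
  | @rel e α f β hef =>
    obtain ⟨rfl, hα'⟩ := G.isPathFrom_cons_iff.mp hα
    obtain ⟨hf, hβ'⟩ := G.isPathFrom_cons_iff.mp hβ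
    rw [GIFS.pathTgt_cons] at hz hw
    have hz' := G.fPathMap_mapsTo h₀ (fun v hv => hrow v (.head ⟨e, rfl, rfl⟩ hv)) hα' hz
    have hw' := G.fPathMap_mapsTo h₀ (fun v hv => hrow v (.head ⟨f, hf, rfl⟩ hv)) hβ' hw
    have hr := G.rpow_r_pos (δ := δ) e
    calc G.fPathMap δ h (e :: α) z ≤ G.bCoef δ h e + h (G.tgt e) * G.r e ^ δ := by
          rw [fPathMap_cons]; nlinarith [hz'.2]
      _ ≤ G.bCoef δ h f := G.bCoef_add_le_bCoef h₀ hef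
      _ ≤ G.fPathMap δ h (f :: β) w := by
          rw [fPathMap_cons]; nlinarith [hw'.1, G.rpow_r_pos (δ := δ) f]
  | @cons e α β _ ih =>
    obtain ⟨rfl, hα'⟩ := G.isPathFrom_cons_iff.mp hα
    obtain ⟨-, hβ'⟩ := G.isPathFrom_cons_iff.mp hβ
    rw [GIFS.pathTgt_cons] at hz hw
    rw [fPathMap_cons, fPathMap_cons]
    gcongr
    · exact (G.rpow_r_pos e).le
    · exact ih (fun v hv => hrow v (.head ⟨e, rfl, rfl⟩ hv)) hα' hβ'
        (by simpa using hlen) hz hw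

end Reachable

lemma adjacent_of_lex_of_mem_fPathSet (hpos : ∀ j, 0 < h j)
    (hrow : ∀ v, Relation.ReflTransGen G.Step i v → G.rowSum δ h v ≤ h v)
    {α β : List G.Edge} (hα : G.IsPathFrom i α) (hβ : G.IsPathFrom i β)
    (hlen : α.length = β.length) (hlex : List.Lex G.elt α β) {x : ℝ}
    (hxα : x ∈ G.fPathSet δ h i α) (hxβ : x ∈ G.fPathSet δ h i β) : G.Adjacent i α β := by
  refine ⟨hα, hβ, hlen, hlex, ?_⟩
  rintro ⟨η, hη, hηlen, hαη, hηβ⟩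
  obtain ⟨z, hz, rfl⟩ := hxα
  obtain ⟨w, hw, hzw⟩ := hxβ
  have h₀ (j : Fin N) : 0 ≤ h j := (hpos j).le
  have hleft := G.fPathMap_le_of_lex h₀ hrow hα hη hηlen.symm hαη hz (left_mem_Icc.2 (h₀ _))
  have hright := G.fPathMap_le_of_lex h₀ hrow hη hβ (hηlen.trans hlen) hηβ
    (right_mem_Icc.2 (h₀ _)) hw
  have hη_pos := G.fPathMap_strictMono (δ := δ) (h := h) η (hpos (G.pathTgt i η))
  linarith

end OGIFS

theorem rho_codings_prefixes_adjacent_general {d N : ℕ} (G : OGIFS (EuclideanSpace ℝ (Fin d)) N)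
    (E : Fin N → Set (EuclideanSpace ℝ (Fin d))) (hE : G.toGIFS.IsInvariant E)
    (δ : ℝ) (hδ : G.toGIFS.IsSimDim δ)
    (hfin : ∀ j, 0 < μH[δ] (E j) ∧ μH[δ] (E j) < ⊤)
    (h : Fin N → ℝ) (hh : ∀ j, h j = (μH[δ] (E j)).toReal) (i : Fin N)
    (ρ : G.toGIFS.InfPath i → ℝ) (hρ : G.IsFCoding δ h i ρ)
    (ω γ : G.toGIFS.InfPath i) (hx : ρ ω = ρ γ) :
    ∀ n : ℕ, 1 ≤ n →
      prefixList ω.1 n = prefixList γ.1 n ∨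
      G.Adjacent i (prefixList ω.1 n) (prefixList γ.1 n) ∨
      G.Adjacent i (prefixList γ.1 n) (prefixList ω.1 n) := by
  intro n _
  have hpos (j : Fin N) : 0 < h j := by
    rw [hh]; exact ENNReal.toReal_pos (hfin j).1.ne' (hfin j).2.ne
  have hsub := G.le_rowSum_of_isInvariant hE hδ.1.le (fun j => (hfin j).2.ne) hh
  have hrow (v : Fin N) (hv : Relation.ReflTransGen G.Step i v) : G.rowSum δ h v ≤ h v :=
    G.rowSum_le_of_isFCoding hδ.1 hsub hE.exists_src_eq hρ hv
  have hω := GIFS.InfPath.isPathFrom_prefixList ω n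
  have hγ := GIFS.InfPath.isPathFrom_prefixList γ n
  have hlen : (prefixList ω.1 n).length = (prefixList γ.1 n).length := by
    simp only [prefixList_length]
  rcases G.lex_trichotomy G.elt_total hω hγ hlen with heq | hlt | hgt
  · exact .inl heq
  · exact .inr (.inl (G.adjacent_of_lex_of_mem_fPathSet hpos hrow hω hγ hlen hlt (hρ ω n)
      (hx ▸ hρ γ n)))
  · exact .inr (.inr (G.adjacent_of_lex_of_mem_fPathSet hpos hrow hγ hω hlen.symm hgt
      (hx ▸ hρ γ n) (hρ ω n)))

/-- If `ω ≠ γ` are two `ρ_i`-codings of the same point of `F_i`, then for every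
`n ≥ 1` the prefixes `ω|_n` and `γ|_n` are equal or adjacent in the dictionary
order on `Γ_i^n`. -/
theorem rho_codings_prefixes_adjacent {d N : ℕ} (G : OGIFS (EuclideanSpace ℝ (Fin d)) N)
    (E : Fin N → Set (EuclideanSpace ℝ (Fin d))) (hE : G.toGIFS.IsInvariant E) (hlin : G.IsLinear E)
    (hosc : G.toGIFS.OSC) (δ : ℝ) (hδ : G.toGIFS.IsSimDim δ)
    (hfin : ∀ j, 0 < μH[δ] (E j) ∧ μH[δ] (E j) < ⊤)
    (h : Fin N → ℝ) (hh : ∀ j, h j = (μH[δ] (E j)).toReal) (i : Fin N)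
    (ρ : G.toGIFS.InfPath i → ℝ) (hρ : G.IsFCoding δ h i ρ)
    (ω γ : G.toGIFS.InfPath i) (hne : ω ≠ γ) (hx : ρ ω = ρ γ) :
    ∀ n : ℕ, 1 ≤ n →
      prefixList ω.1 n = prefixList γ.1 n ∨
      G.Adjacent i (prefixList ω.1 n) (prefixList γ.1 n) ∨
      G.Adjacent i (prefixList γ.1 n) (prefixList ω.1 n) :=
  rho_codings_prefixes_adjacent_general G E hE δ hδ hfin h hh i ρ hρ ω γ hx
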